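/- In the weighted CPS-3F reduction construction, the condition d_dF(A', B') ≤ 1 forces that for every i with 1 ≤ i ≤ n, if A' contains a_{2i-1} = (i,1) and not a_{2i}, and B' contains at least one of b_{2i-1}, b_{2i}, then B' contains b_{2i-1} = (i, 0); symmetrically, if A' contains a_{2i} and not a_{2i-1}, then B' cannot contain b_{2i-1} without containing b_{2i}. More precisely: for each i, at least one of the following holds: (a_{2i-1} ∈ A' and b_{2i-1} ∈ B') or (a_{2i} ∈ A' and b_{2i} ∈ B'), provided A' contains at least one of a_{2i-1}, a_{2i} and B' contains at least one of b_{2i-1}, b_{2i}. -/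

import Mathlib

/-- One step of a monotone coupling on 0-based index pairs:
each index advances by 0 or 1, and at least one advances. -/
def StepN (p q : ℕ × ℕ) : Prop :=
  p.1 ≤ q.1 ∧ q.1 ≤ p.1 + 1 ∧ p.2 ≤ q.2 ∧ q.2 ≤ p.2 + 1 ∧ p ≠ q

/-- A coupling of sequences of lengths `la` and `lb`: starts at `(0,0)`,
ends at `(la-1, lb-1)`, and advances by `StepN`. -/
def IsCouplingL (la lb : ℕ) (c : List (ℕ × ℕ)) : Prop :=
  c.head? = some (0, 0) ∧ c.getLast? = some (la - 1, lb - 1) ∧ c.Chain' StepN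

/-- The maximal pointwise distance along a coupling. -/
noncomputable def costL {X : Type*} [MetricSpace X] [Inhabited X]
    (P Q : List X) (c : List (ℕ × ℕ)) : ℝ :=
  (c.map (fun p => dist (P.getD p.1 default) (Q.getD p.2 default))).foldr max 0

/-- The discrete Fréchet distance of two finite sequences (lists) of points. -/
noncomputable def dFL {X : Type*} [MetricSpace X] [Inhabited X] (P Q : List X) : ℝ :=
  sInf { r | ∃ c, IsCouplingL P.length Q.length c ∧ costL P Q c = r }

abbrev Pt := EuclideanSpace ℝ (Fin 2)

noncomputable def pt (x y : ℝ) : Pt := WithLp.toLp 2 ![x, y]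

/-- The (unweighted) chain `A` of the reduction. -/
noncomputable def ptsA (n : ℕ) : List Pt :=
  (List.finRange n).flatMap
    (fun i => [pt ((i : ℝ) + 1) 1, pt ((i : ℝ) + 1 + 0.2) 1])

/-- The (unweighted) chain `B` of the reduction. -/
noncomputable def ptsB (n : ℕ) : List Pt :=
  (List.finRange n).flatMap
    (fun i => [pt ((i : ℝ) + 1) 0, pt ((i : ℝ) + 1 + 0.2) 0])

/-! Every coupling pairs each point `a` of `P` with some point of `Q`, so the cost of every
coupling, and hence `dFL P Q`, is at least the distance from `a` to the nearest point of `Q`.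
In the reduction all of `B` lies on the line `y = 0` and all of `A` on `y = 1`, so a point
`(x, 1)` of `A'` is within distance `1` of a point of `B'` only if that point is its vertical
drop `(x, 0)`. -/

theorem List.IsChain.exists_mem_eq_of_le_succ {α : Type*} {R : α → α → Prop} {f : α → ℕ}
    (hR : ∀ x y, R x y → f y ≤ f x + 1) :
    ∀ {l : List α}, l.IsChain R → ∀ {a b : α}, l.head? = some a → l.getLast? = some b →
      ∀ j, f a ≤ j → j ≤ f b → ∃ x ∈ l, f x = j
  | [], _, _, _, ha, _, _, _, _ => by simp at ha
  | [x], _, _, _, ha, hb, j, haj, hjb => by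
    simp only [List.head?_cons, List.getLast?_singleton, Option.some.injEq] at ha hb
    subst ha hb
    exact ⟨x, List.mem_singleton_self x, by omega⟩
  | x :: y :: t, hl, a, b, ha, hb, j, haj, hjb => by
    simp only [List.head?_cons, Option.some.injEq] at ha
    subst ha
    obtain ⟨hxy, hl⟩ := List.isChain_cons_cons.mp hl
    by_cases hj : f x = j
    · exact ⟨x, List.mem_cons_self, hj⟩
    · have hyj : f y ≤ j := by have := hR _ _ hxy; omega
      obtain ⟨z, hz, hzj⟩ := exists_mem_eq_of_le_succ hR hl rfl (by simpa using hb) j hyj hjb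
      exact ⟨z, List.mem_cons_of_mem _ hz, hzj⟩

theorem StepN.le {p q : ℕ × ℕ} (h : StepN p q) : p ≤ q :=
  ⟨h.1, h.2.2.1⟩

theorem reflTransGen_stepN_zero_zero (a b : ℕ) : Relation.ReflTransGen StepN (0, 0) (a, b) := by
  induction a with
  | zero =>
    induction b with
    | zero => exact .refl
    | succ b ih => exact ih.tail ⟨le_rfl, by omega, by omega, le_rfl, by simp⟩
  | succ a ih => exact ih.tail ⟨by omega, le_rfl, le_rfl, by omega, by simp⟩

theorem exists_isCouplingL (la lb : ℕ) : ∃ c, IsCouplingL la lb c := by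
  obtain ⟨l, hl, hlast⟩ := List.exists_isChain_cons_of_relationReflTransGen
    (reflTransGen_stepN_zero_zero (la - 1) (lb - 1))
  exact ⟨_, rfl, by rw [List.getLast?_eq_some_getLast (List.cons_ne_nil _ _), hlast], hl⟩

theorem IsCouplingL.le_of_mem {la lb : ℕ} {c : List (ℕ × ℕ)} (hc : IsCouplingL la lb c) :
    ∀ p ∈ c, p ≤ (la - 1, lb - 1) :=
  hc.2.2.backwards_induction _ _ (fun _ _ hpq hq => hpq.le.trans hq)
    (fun _ => (List.getLast_of_mem_getLast? hc.2.1).le)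

theorem IsCouplingL.exists_mem_fst_eq {la lb : ℕ} {c : List (ℕ × ℕ)} (hc : IsCouplingL la lb c)
    (hlb : 0 < lb) {j : ℕ} (hj : j < la) : ∃ k < lb, (j, k) ∈ c := by
  obtain ⟨⟨j', k⟩, hmem, rfl⟩ := hc.2.2.exists_mem_eq_of_le_succ (f := Prod.fst)
    (fun _ _ h => h.2.1) hc.1 hc.2.1 j (Nat.zero_le j) (by omega)
  have hk : k ≤ lb - 1 := (hc.le_of_mem _ hmem).2
  exact ⟨k, by omega, hmem⟩

section Frechet

variable {X : Type*} [MetricSpace X] [Inhabited X]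

theorem dist_le_costL (P Q : List X) {c : List (ℕ × ℕ)} {p : ℕ × ℕ} (hp : p ∈ c) :
    dist (P.getD p.1 default) (Q.getD p.2 default) ≤ costL P Q c :=
  List.le_max_of_le' 0 (List.mem_map_of_mem hp) le_rfl

theorem dist_le_dFL_of_forall_dist_le {P Q : List X} (hQ : Q ≠ []) {a b : X} (ha : a ∈ P)
    (hb : ∀ b' ∈ Q, dist a b ≤ dist a b') : dist a b ≤ dFL P Q := by
  obtain ⟨c₀, hc₀⟩ := exists_isCouplingL P.length Q.length
  refine le_csInf ⟨_, c₀, hc₀, rfl⟩ ?_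
  rintro _ ⟨c, hc, rfl⟩
  obtain ⟨j, hj, rfl⟩ := List.mem_iff_getElem.mp ha
  obtain ⟨k, hk, hjk⟩ := hc.exists_mem_fst_eq (List.length_pos_iff.mpr hQ) hj
  calc dist P[j] b ≤ dist P[j] Q[k] := hb _ (List.getElem_mem hk)
    _ = dist (P.getD j default) (Q.getD k default) := by
      rw [List.getD_eq_getElem _ _ hj, List.getD_eq_getElem _ _ hk]
    _ ≤ costL P Q c := dist_le_costL P Q hjk

theorem exists_dist_le_of_dFL_le {P Q : List X} (hQ : Q ≠ []) {r : ℝ} (h : dFL P Q ≤ r)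
    {a : X} (ha : a ∈ P) : ∃ b ∈ Q, dist a b ≤ r := by
  classical
  obtain ⟨b, hb, hmin⟩ :=
    Q.toFinset.exists_min_image (dist a) (List.toFinset_nonempty_iff Q |>.mpr hQ)
  rw [List.mem_toFinset] at hb
  have hnearest : dist a b ≤ dFL P Q :=
    dist_le_dFL_of_forall_dist_le hQ ha fun b' hb' => hmin b' (List.mem_toFinset.mpr hb')
  exact ⟨b, hb, hnearest.trans h⟩

end Frechet

theorem exists_eq_pt_zero_of_mem_ptsB {n : ℕ} {b : Pt} (hb : b ∈ ptsB n) : ∃ x, b = pt x 0 := by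
  simp only [ptsB, List.mem_flatMap, List.mem_cons, List.not_mem_nil, or_false] at hb
  obtain ⟨i, -, rfl | rfl⟩ := hb <;> exact ⟨_, rfl⟩

theorem dist_pt_sq (x y x' y' : ℝ) :
    dist (pt x y) (pt x' y') ^ 2 = (x - x') ^ 2 + (y - y') ^ 2 := by
  simp [EuclideanSpace.dist_eq, pt, Fin.sum_univ_two, Real.dist_eq, sq_abs, Real.sq_sqrt,
    add_nonneg, sq_nonneg]

theorem eq_of_dist_pt_one_pt_zero_le_one {x x' : ℝ} (h : dist (pt x 1) (pt x' 0) ≤ 1) :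
    x' = x := by
  have hsq := dist_pt_sq x 1 x' 0
  have : dist (pt x 1) (pt x' 0) ^ 2 ≤ 1 := pow_le_one₀ dist_nonneg h
  nlinarith [sq_nonneg (x - x')]

theorem wcps_alignment_general (n : ℕ) (A' B' : List Pt)
    (hB' : B'.Sublist (ptsB n))
    (hd : dFL A' B' ≤ 1) :
    ∀ i : Fin n,
      (pt ((i : ℝ) + 1) 1 ∈ A' ∨ pt ((i : ℝ) + 1 + 0.2) 1 ∈ A') →
      (pt ((i : ℝ) + 1) 0 ∈ B' ∨ pt ((i : ℝ) + 1 + 0.2) 0 ∈ B') →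
      (pt ((i : ℝ) + 1) 1 ∈ A' ∧ pt ((i : ℝ) + 1) 0 ∈ B') ∨
      (pt ((i : ℝ) + 1 + 0.2) 1 ∈ A' ∧ pt ((i : ℝ) + 1 + 0.2) 0 ∈ B') := by
  intro i hA hB
  have hB'ne : B' ≠ [] := by rcases hB with h | h <;> exact List.ne_nil_of_mem h
  have drop : ∀ x, pt x 1 ∈ A' → pt x 0 ∈ B' := by
    intro x hx
    obtain ⟨b, hb, hdist⟩ := exists_dist_le_of_dFL_le hB'ne hd hx
    obtain ⟨x', rfl⟩ := exists_eq_pt_zero_of_mem_ptsB (hB'.subset hb)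
    rwa [eq_of_dist_pt_one_pt_zero_le_one hdist] at hb
  rcases hA with h | h
  exacts [.inl ⟨h, drop _ h⟩, .inr ⟨h, drop _ h⟩]

/-- The condition `d_dF(A',B') ≤ 1` forces that, for every `i`, whenever `A'`
contains one of `a_{2i-1}, a_{2i}` and `B'` contains one of `b_{2i-1}, b_{2i}`,
then `a_{2i-1} ∈ A' ∧ b_{2i-1} ∈ B'` or `a_{2i} ∈ A' ∧ b_{2i} ∈ B'`. -/
theorem wcps_alignment (n : ℕ) (A' B' : List Pt)
    (hA' : A'.Sublist (ptsA n)) (hB' : B'.Sublist (ptsB n))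
    (hd : dFL A' B' ≤ 1) :
    ∀ i : Fin n,
      (pt ((i : ℝ) + 1) 1 ∈ A' ∨ pt ((i : ℝ) + 1 + 0.2) 1 ∈ A') →
      (pt ((i : ℝ) + 1) 0 ∈ B' ∨ pt ((i : ℝ) + 1 + 0.2) 0 ∈ B') →
      (pt ((i : ℝ) + 1) 1 ∈ A' ∧ pt ((i : ℝ) + 1) 0 ∈ B') ∨
      (pt ((i : ℝ) + 1 + 0.2) 1 ∈ A' ∧ pt ((i : ℝ) + 1 + 0.2) 0 ∈ B') :=
  wcps_alignment_general n A' B' hB' hd
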